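/- arXiv:1703.06286 — 5 statements merged into one kernel-verified Lean document; each statement's English description precedes it below -/
import Mathlib

section
/- A finite simple connected graph G induces a 2-periodic Grover walk if and only if G is isomorphic to P_2, the path on two vertices (a single edge). -/
open Matrix SimpleGraph

/-- The Grover transfer matrix `U = U(G)` of a finite simple graph `G`, a `2m × 2m`
complex matrix indexed by the darts (symmetric arcs) of `G`.  For darts `e, f`,
`U e f = 2/deg(t(f)) - 1` if `f = e⁻¹`, `U e f = 2/deg(t(f))` if `t(f) = o(e)` and
`f ≠ e⁻¹`, and `U e f = 0` otherwise. -/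
noncomputable def groverMatrix {V : Type*} [Fintype V] [DecidableEq V]
    (G : SimpleGraph V) [DecidableRel G.Adj] : Matrix G.Dart G.Dart ℂ :=
  fun e f =>
    if f = e.symm then 2 / (G.degree f.snd : ℂ) - 1
    else if f.snd = e.fst then 2 / (G.degree f.snd : ℂ)
    else 0

/-- `G` induces a `k`-periodic Grover walk: `U ^ k = 1` and `U ^ j ≠ 1` for `1 ≤ j < k`. -/
def InducesPeriodicGroverWalk {V : Type*} [Fintype V] [DecidableEq V]
    (G : SimpleGraph V) [DecidableRel G.Adj] (k : ℕ) : Prop :=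
  groverMatrix G ^ k = 1 ∧ ∀ j : ℕ, 1 ≤ j → j < k → groverMatrix G ^ j ≠ 1

/-- The transition matrix of the isotropic random walk on `G`:
`T u v = 1/deg(u)` if `u ∼ v` and `0` otherwise. -/
noncomputable def transitionMatrix {V : Type*} [Fintype V]
    (G : SimpleGraph V) [DecidableRel G.Adj] : Matrix V V ℝ :=
  fun u v => if G.Adj u v then 1 / (G.degree u : ℝ) else 0

section Aux

variable {V : Type*} [Fintype V] [DecidableEq V] (G : SimpleGraph V) [DecidableRel G.Adj]

lemma grover_diag_sq (e : G.Dart) :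
    (groverMatrix G ^ 2) e e
      = (2 / (G.degree e.fst : ℂ) - 1) * (2 / (G.degree e.snd : ℂ) - 1) := by
  rw [pow_two, Matrix.mul_apply]
  rw [Finset.sum_eq_single e.symm]
  · unfold groverMatrix
    rw [if_pos rfl, if_pos (e.symm_symm).symm]; rfl
  · intro g _ hg
    by_cases h1 : g.snd = e.fst
    · have h2 : e.snd ≠ g.fst := by
        intro h2
        exact hg (SimpleGraph.Dart.ext _ _ (Prod.ext h2.symm h1))
      have : groverMatrix G g e = 0 := by
        unfold groverMatrix
        rw [if_neg, if_neg h2]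
        intro h3
        exact hg (by rw [h3, SimpleGraph.Dart.symm_symm])
      rw [this, mul_zero]
    · have : groverMatrix G e g = 0 := by
        unfold groverMatrix
        rw [if_neg hg, if_neg h1]
      rw [this, zero_mul]
  · intro h; exact absurd (Finset.mem_univ _) h

lemma deg_eq_one (a b : ℕ) (ha : 1 ≤ a) (hb : 1 ≤ b)
    (h : (2 / (a : ℂ) - 1) * (2 / (b : ℂ) - 1) = 1) : a = 1 ∧ b = 1 := by
  have ha0 : (a : ℂ) ≠ 0 := Nat.cast_ne_zero.mpr (by omega)
  have hb0 : (b : ℂ) ≠ 0 := Nat.cast_ne_zero.mpr (by omega)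
  have key : (a : ℂ) + b = 2 := by
    field_simp at h
    linear_combination -h/2
  have : a + b = 2 := by exact_mod_cast key
  omega

lemma pg2_adj (i j : Fin 2) : (SimpleGraph.pathGraph 2).Adj i j ↔ i ≠ j := by
  rw [SimpleGraph.pathGraph_adj]
  fin_cases i <;> fin_cases j <;> simp

lemma fin2_eq (i j k : Fin 2) (h1 : i ≠ k) (h2 : j ≠ k) : i = j := by
  fin_cases i <;> fin_cases j <;> fin_cases k <;> simp_all

end Aux

/-- **Theorem 2.1.** A finite simple connected graph `G` induces a
`2`-periodic Grover walk iff `G` is isomorphic to the path graph `P₂`. -/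
theorem two_periodic_iff_pathGraph_two {V : Type*} [Fintype V] [DecidableEq V]
    (G : SimpleGraph V) [DecidableRel G.Adj] (hG : G.Connected) :
    InducesPeriodicGroverWalk G 2 ↔ Nonempty (G ≃g SimpleGraph.pathGraph 2) := by
  constructor
  · rintro ⟨h1, h2⟩
    have hne : groverMatrix G ≠ 1 := by
      have := h2 1 le_rfl one_lt_two
      rwa [pow_one] at this
    -- there is a dart
    have hD : Nonempty G.Dart := by
      by_contra hempty
      apply hne
      ext e f
      exact absurd ⟨e⟩ hempty
    obtain ⟨e⟩ := hD
    -- every dart has degree-1 endpoints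
    have hdeg : ∀ d : G.Dart, G.degree d.fst = 1 ∧ G.degree d.snd = 1 := by
      intro d
      have hdiag : (groverMatrix G ^ 2) d d = 1 := by
        rw [h1, Matrix.one_apply_eq]
      rw [grover_diag_sq] at hdiag
      exact deg_eq_one _ _
        (G.degree_pos_iff_exists_adj d.fst |>.mpr ⟨d.snd, d.adj⟩)
        (G.degree_pos_iff_exists_adj d.snd |>.mpr ⟨d.fst, d.adj.symm⟩) hdiag
    -- unique neighbor
    have huniq : ∀ u x w : V, G.Adj u x → G.Adj u w → x = w := by
      intro u x w hx hw
      have hd := (hdeg ⟨(u, x), hx⟩).1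
      have := Finset.card_le_one.mp (le_of_eq hd)
      exact this x ((G.mem_neighborFinset u x).mpr hx) w ((G.mem_neighborFinset u w).mpr hw)
    -- all vertices are e.fst or e.snd
    have step : ∀ u x : V, G.Adj u x → (u = e.fst ∨ u = e.snd) → (x = e.fst ∨ x = e.snd) := by
      rintro u x h (rfl | rfl)
      · exact Or.inr (huniq _ _ _ h e.adj)
      · exact Or.inl (huniq _ _ _ h e.adj.symm)
    have key : ∀ (u v : V) (w : G.Walk u v),
        (u = e.fst ∨ u = e.snd) → (v = e.fst ∨ v = e.snd) := by
      intro u v w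
      induction w with
      | nil => exact id
      | cons h q ih => intro hu; exact ih (step _ _ h hu)
    have hall : ∀ v : V, v = e.fst ∨ v = e.snd := by
      intro v
      obtain ⟨w⟩ := hG.preconnected e.fst v
      exact key _ _ w (Or.inl rfl)
    have hab : e.fst ≠ e.snd := e.fst_ne_snd
    -- adjacency is exactly ≠
    have hAdj : ∀ u v : V, G.Adj u v ↔ u ≠ v := by
      intro u v
      constructor
      · exact fun h => h.ne
      · intro huv
        rcases hall u with rfl | rfl <;> rcases hall v with rfl | rfl
        · exact absurd rfl huv
        · exact e.adj
        · exact e.adj.symm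
        · exact absurd rfl huv
    -- the equivalence
    let E : V ≃ Fin 2 :=
      { toFun := fun v => if v = e.fst then 0 else 1
        invFun := fun i => if i = 0 then e.fst else e.snd
        left_inv := by
          intro v
          rcases hall v with rfl | rfl
          · simp
          · simp [hab.symm]
        right_inv := by
          intro i
          fin_cases i
          · simp
          · simp [hab.symm] }
    refine ⟨⟨E, ?_⟩⟩
    intro u v
    rw [pathGraph_two_eq_top, top_adj, hAdj]
    exact E.injective.ne_iff
  · rintro ⟨φ⟩
    have hAdj : ∀ u v : V, G.Adj u v ↔ u ≠ v := by
      intro u v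
      rw [← φ.map_rel_iff, pg2_adj]
      exact φ.toEquiv.injective.ne_iff
    have hcard : Fintype.card V = 2 := by
      rw [← Fintype.card_fin 2]
      exact Fintype.card_congr φ.toEquiv
    have hdeg : ∀ v : V, G.degree v = 1 := by
      intro v
      have hnb : G.neighborFinset v = Finset.univ.erase v := by
        ext u
        simp [SimpleGraph.mem_neighborFinset, hAdj, Finset.mem_erase, ne_comm]
      rw [← G.card_neighborFinset_eq_degree, hnb,
        Finset.card_erase_of_mem (Finset.mem_univ v), Finset.card_univ, hcard]
    have two : ∀ x y z : V, x ≠ z → y ≠ z → x = y := by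
      intro x y z hx hy
      have := fin2_eq (φ x) (φ y) (φ z)
        (fun h => hx (φ.toEquiv.injective h)) (fun h => hy (φ.toEquiv.injective h))
      exact φ.toEquiv.injective this
    have hU : ∀ d f : G.Dart, groverMatrix G d f = if f = d.symm then 1 else 0 := by
      intro d f
      unfold groverMatrix
      by_cases h : f = d.symm
      · rw [if_pos h, if_pos h, hdeg]
        norm_num
      · rw [if_neg h, if_neg h, if_neg]
        intro h1
        apply h
        have h2 : f.fst = d.snd := two f.fst d.snd f.snd f.adj.ne (fun h => d.adj.ne' (h.trans h1))
        exact SimpleGraph.Dart.ext _ _ (Prod.ext h2 h1)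
    constructor
    · ext d f
      rw [pow_two, Matrix.mul_apply, Finset.sum_eq_single d.symm]
      · rw [hU, hU, if_pos rfl, SimpleGraph.Dart.symm_symm, one_mul, Matrix.one_apply]
        by_cases h : d = f
        · rw [if_pos h, if_pos h.symm]
        · rw [if_neg h, if_neg (Ne.symm h)]
      · intro g _ hg
        rw [hU, if_neg hg, zero_mul]
      · intro h; exact absurd (Finset.mem_univ _) h
    · intro j hj1 hj2
      interval_cases j
      rw [pow_one]
      intro hone
      have ha : G.Adj (φ.symm 0) (φ.symm 1) := by
        rw [hAdj]
        intro h
        exact absurd (φ.symm.toEquiv.injective h) (by decide)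
      set d : G.Dart := ⟨(φ.symm 0, φ.symm 1), ha⟩
      have h0 : groverMatrix G d d = 0 := by
        rw [hU, if_neg (SimpleGraph.Dart.symm_ne d).symm]
      rw [hone, Matrix.one_apply_eq] at h0
      exact one_ne_zero h0
end

section
/- A finite simple connected graph G induces a 3-periodic Grover walk if and only if G is isomorphic to the cycle graph C_3. -/
open Matrix SimpleGraph

/-!
The Grover matrix is the Grover coin `2P - 1` composed with the flip `e ↦ e⁻¹`, where `P` averages
over the darts with a common origin. As `P` is a symmetric idempotent, the coin is a symmetric
involution and `U` is orthogonal, so `U³ = 1` iff `U² = Uᵀ`. Only one dart can contribute to an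
entry of `U²`. On the diagonal this gives `(2/deg u - 1)(2/deg v - 1) = 0` for every edge `uv`,
because `U` vanishes on the diagonal. At the pair of darts `(w,v), (v,u)` of a path `u ∼ v ∼ w`,
`Uᵀ` has entry `2/deg v ≠ 0`, so `U²` needs a dart from `u` to `w`. A connected graph in which
every path of length two closes up into a triangle is complete, and a complete graph with a vertex
of degree `2` is `C₃`. Conversely, on `C₃` the Grover matrix is the 0/1 non-backtracking matrix,
whose cube is computed to be `1`.
-/

theorem IsIdempotentElem.two_nsmul_sub_one_mul_self {R : Type*} [Ring R] {p : R}
    (hp : IsIdempotentElem p) : (2 • p - 1) * (2 • p - 1) = 1 := by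
  have : (2 • p - 1) * (2 • p - 1) = 4 • (p * p) - 4 • p + 1 := by noncomm_ring
  rw [this, hp.eq]
  abel

theorem SimpleGraph.Connected.eq_top_of_adj_of_adj {V : Type*} {G : SimpleGraph V}
    (hG : G.Connected) (h : ∀ ⦃u v w⦄, G.Adj u v → G.Adj v w → u ≠ w → G.Adj u w) :
    G = ⊤ := by
  ext x y
  refine ⟨Adj.ne, fun hxy => ?_⟩
  obtain ⟨p⟩ := hG x y
  induction p with
  | nil => exact absurd rfl hxy
  | @cons x z y hxz _ ih =>
    by_cases hzy : z = y
    · exact hzy ▸ hxz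
    · exact h hxz (ih hzy) hxy

namespace SimpleGraph

variable {V : Type*} [Fintype V] {G : SimpleGraph V} [DecidableRel G.Adj]

theorem Dart.degree_fst_ne_zero (e : G.Dart) : (G.degree e.fst : ℂ) ≠ 0 :=
  Nat.cast_ne_zero.2 ((G.degree_pos_iff_exists_adj e.fst).2 ⟨e.snd, e.adj⟩).ne'

variable [DecidableEq V]

noncomputable def dartOriginAverage (G : SimpleGraph V) [DecidableRel G.Adj] :
    Matrix G.Dart G.Dart ℂ :=
  fun e f => if e.fst = f.fst then (G.degree e.fst : ℂ)⁻¹ else 0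

theorem dartOriginAverage_isSymm : (dartOriginAverage G).IsSymm := by
  ext e f
  simp only [transpose_apply, dartOriginAverage]
  by_cases h : e.fst = f.fst
  · rw [if_pos h, if_pos h.symm, h]
  · rw [if_neg h, if_neg (Ne.symm h)]

theorem isIdempotentElem_dartOriginAverage : IsIdempotentElem (dartOriginAverage G) := by
  ext e f
  have hterm (g : G.Dart) : dartOriginAverage G e g * dartOriginAverage G g f =
      if g.fst = e.fst then (G.degree e.fst : ℂ)⁻¹ * dartOriginAverage G e f else 0 := by
    simp only [dartOriginAverage]
    by_cases hg : g.fst = e.fst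
    · rw [if_pos hg.symm, if_pos hg, hg]
    · rw [if_neg (Ne.symm hg), if_neg hg, zero_mul]
  rw [mul_apply, Finset.sum_congr rfl fun g _ => hterm g, ← Finset.sum_filter,
    Finset.sum_const, dart_fst_fiber_card_eq_degree, nsmul_eq_mul,
    mul_inv_cancel_left₀ e.degree_fst_ne_zero]

noncomputable def groverCoin (G : SimpleGraph V) [DecidableRel G.Adj] : Matrix G.Dart G.Dart ℂ :=
  2 • dartOriginAverage G - 1

theorem groverCoin_mul_self : groverCoin G * groverCoin G = 1 :=
  isIdempotentElem_dartOriginAverage.two_nsmul_sub_one_mul_self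

theorem groverCoin_isSymm : (groverCoin G).IsSymm :=
  (dartOriginAverage_isSymm.smul 2).sub isSymm_one

theorem groverMatrix_apply_eq_groverCoin_apply_symm (e f : G.Dart) :
    groverMatrix G e f = groverCoin G e f.symm := by
  have hflip : e = f.symm ↔ f = e.symm := eq_comm.trans Dart.symm_involutive.eq_iff
  have hsymm_fst : f.symm.fst = f.snd := rfl
  simp only [groverMatrix, groverCoin, dartOriginAverage, Matrix.sub_apply, Matrix.smul_apply,
    one_apply, hflip, hsymm_fst]
  by_cases hsnd : f.snd = e.fst
  · rw [if_pos hsnd.symm, ← hsnd, if_pos rfl]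
    split_ifs <;> simp [div_eq_mul_inv]
  · have hfe : f ≠ e.symm := fun h => hsnd (h ▸ rfl)
    rw [if_neg hfe, if_neg hsnd, if_neg (Ne.symm hsnd), if_neg hfe]
    simp

theorem groverMatrix_mul_transpose : groverMatrix G * (groverMatrix G)ᵀ = 1 := by
  ext e f
  calc (groverMatrix G * (groverMatrix G)ᵀ) e f
      = ∑ g : G.Dart, groverCoin G e g.symm * groverCoin G g.symm f := by
        simp only [mul_apply, transpose_apply, groverMatrix_apply_eq_groverCoin_apply_symm,
          groverCoin_isSymm.apply]
    _ = (groverCoin G * groverCoin G) e f :=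
        Equiv.sum_comp (Dart.symm_involutive.toPerm _) fun g => groverCoin G e g * groverCoin G g f
    _ = (1 : Matrix G.Dart G.Dart ℂ) e f := by rw [groverCoin_mul_self]

theorem groverMatrix_pow_three_eq_one_iff :
    groverMatrix G ^ 3 = 1 ↔ groverMatrix G * groverMatrix G = (groverMatrix G)ᵀ := by
  constructor
  · intro h
    calc groverMatrix G * groverMatrix G
        = groverMatrix G ^ 3 * (groverMatrix G)ᵀ := by
          rw [pow_three, ← mul_assoc, mul_assoc, groverMatrix_mul_transpose, mul_one]
      _ = (groverMatrix G)ᵀ := by rw [h, one_mul]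
  · intro h
    rw [pow_three, h, groverMatrix_mul_transpose]

theorem groverMatrix_apply_of_snd_ne {e f : G.Dart} (h : f.snd ≠ e.fst) :
    groverMatrix G e f = 0 := by
  have hfe : f ≠ e.symm := fun hfe => h (hfe ▸ rfl)
  simp only [groverMatrix, if_neg hfe, if_neg h]

theorem groverMatrix_apply_symm (e : G.Dart) :
    groverMatrix G e e.symm = 2 / (G.degree e.fst : ℂ) - 1 :=
  if_pos rfl

theorem groverMatrix_apply_of_snd_eq {e f : G.Dart} (h : f.snd = e.fst) (hfe : f ≠ e.symm) :
    groverMatrix G e f = 2 / (G.degree e.fst : ℂ) := by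
  simp only [groverMatrix]
  rw [if_neg hfe, if_pos h, h]

theorem groverMatrix_mul_self_apply_of_adj {e f : G.Dart} (h : G.Adj f.snd e.fst) :
    (groverMatrix G * groverMatrix G) e f =
      groverMatrix G e ⟨(f.snd, e.fst), h⟩ * groverMatrix G ⟨(f.snd, e.fst), h⟩ f := by
  rw [mul_apply]
  refine Fintype.sum_eq_single _ fun g hg => ?_
  by_cases hge : g.snd = e.fst
  · have hgf : f.snd ≠ g.fst := fun hgf => hg (Dart.ext _ _ (Prod.ext hgf.symm hge))
    rw [groverMatrix_apply_of_snd_ne hgf, mul_zero]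
  · rw [groverMatrix_apply_of_snd_ne hge, zero_mul]

theorem groverMatrix_mul_self_apply_of_not_adj {e f : G.Dart} (h : ¬G.Adj f.snd e.fst) :
    (groverMatrix G * groverMatrix G) e f = 0 := by
  rw [mul_apply]
  refine Finset.sum_eq_zero fun g _ => ?_
  by_cases hge : g.snd = e.fst
  · have hgf : f.snd ≠ g.fst := fun hgf => h (hgf ▸ hge ▸ g.adj)
    rw [groverMatrix_apply_of_snd_ne hgf, mul_zero]
  · rw [groverMatrix_apply_of_snd_ne hge, zero_mul]

theorem degree_eq_two_or_degree_eq_two_of_groverMatrix_mul_self_eq_transpose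
    (hU : groverMatrix G * groverMatrix G = (groverMatrix G)ᵀ) {u v : V} (h : G.Adj u v) :
    G.degree u = 2 ∨ G.degree v = 2 := by
  let e : G.Dart := ⟨(u, v), h⟩
  have hdiag : groverMatrix G e e.symm * groverMatrix G e.symm e = 0 := by
    have := congrFun (congrFun hU e) e
    rwa [groverMatrix_mul_self_apply_of_adj h.symm, transpose_apply,
      groverMatrix_apply_of_snd_ne e.snd_ne_fst] at this
  have hback := groverMatrix_apply_symm e.symm
  rw [Dart.symm_symm] at hback
  have eq_two (n : ℕ) (hn : 2 / (n : ℂ) - 1 = 0) : n = 2 := by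
    have hn0 : (n : ℂ) ≠ 0 := fun hn0 => by simp [hn0] at hn
    rw [sub_eq_zero, div_eq_one_iff_eq hn0] at hn
    exact_mod_cast hn.symm
  rw [groverMatrix_apply_symm, hback, mul_eq_zero] at hdiag
  exact hdiag.imp (eq_two _) (eq_two _)

theorem adj_of_groverMatrix_mul_self_eq_transpose
    (hU : groverMatrix G * groverMatrix G = (groverMatrix G)ᵀ) {u v w : V}
    (huv : G.Adj u v) (hvw : G.Adj v w) (huw : u ≠ w) : G.Adj u w := by
  let e : G.Dart := ⟨(w, v), hvw.symm⟩
  let f : G.Dart := ⟨(v, u), huv.symm⟩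
  have hfe : e ≠ f.symm := fun hfe => huw (congrArg (·.fst) hfe).symm
  have hentry := congrFun (congrFun hU e) f
  rw [transpose_apply, groverMatrix_apply_of_snd_eq rfl hfe] at hentry
  by_contra hwu
  rw [groverMatrix_mul_self_apply_of_not_adj hwu] at hentry
  exact div_ne_zero two_ne_zero f.degree_fst_ne_zero hentry.symm

theorem inducesPeriodicGroverWalk_iff_orderOf_eq {k : ℕ} (hk : 0 < k) :
    InducesPeriodicGroverWalk G k ↔ orderOf (groverMatrix G) = k := by
  rw [orderOf_eq_iff hk, InducesPeriodicGroverWalk]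
  exact and_congr_right' ⟨fun h j hjk hj => h j hj hjk, fun h j hj hjk => h j hjk hj⟩

theorem groverMatrix_ne_one_iff : groverMatrix G ≠ 1 ↔ Nonempty G.Dart := by
  constructor
  · intro hU
    by_contra hD
    rw [not_nonempty_iff] at hD
    exact hU (Subsingleton.elim _ _)
  · rintro ⟨e⟩ hU
    have hee := congrFun (congrFun hU e) e
    rw [groverMatrix_apply_of_snd_ne e.snd_ne_fst, one_apply_eq] at hee
    exact zero_ne_one hee

-- Hashimoto's non-backtracking matrix, transposed to the indexing convention of `groverMatrix`.
def nonBacktrackingMatrix (G : SimpleGraph V) [DecidableRel G.Adj] : Matrix G.Dart G.Dart ℕ :=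
  fun e f => if f.snd = e.fst ∧ f ≠ e.symm then 1 else 0

theorem groverMatrix_eq_map_nonBacktrackingMatrix (h2 : ∀ v, G.degree v = 2) :
    groverMatrix G = (Nat.castRingHom ℂ).mapMatrix (nonBacktrackingMatrix G) := by
  ext e f
  by_cases hsnd : f.snd = e.fst
  · by_cases hfe : f = e.symm
    · simp [groverMatrix, nonBacktrackingMatrix, hfe, h2]
    · simp [groverMatrix, nonBacktrackingMatrix, hfe, hsnd, h2]
  · simp [groverMatrix_apply_of_snd_ne hsnd, nonBacktrackingMatrix, hsnd]

theorem orderOf_groverMatrix_cycleGraph_three : orderOf (groverMatrix (cycleGraph 3)) = 3 := by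
  have hNB : nonBacktrackingMatrix (cycleGraph 3) ^ 3 = 1 := by decide
  refine orderOf_eq_prime ?_ (groverMatrix_ne_one_iff.2 ⟨⟨(0, 1), by decide⟩⟩)
  rw [groverMatrix_eq_map_nonBacktrackingMatrix fun _ => cycleGraph_degree_three_le, ← map_pow,
    hNB, map_one]

end SimpleGraph

namespace SimpleGraph.Iso

variable {V W : Type*} {G : SimpleGraph V} {H : SimpleGraph W}

def dartEquiv (φ : G ≃g H) : G.Dart ≃ H.Dart where
  toFun d := ⟨d.toProd.map φ φ, φ.map_adj_iff.2 d.adj⟩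
  invFun d := ⟨d.toProd.map φ.symm φ.symm, φ.symm.map_adj_iff.2 d.adj⟩
  left_inv d := by ext <;> simp
  right_inv d := by ext <;> simp

variable [Fintype V] [DecidableEq V] [Fintype W] [DecidableEq W]
  [DecidableRel G.Adj] [DecidableRel H.Adj]

theorem groverMatrix_apply_dartEquiv (φ : G ≃g H) (e f : G.Dart) :
    groverMatrix H (φ.dartEquiv e) (φ.dartEquiv f) = groverMatrix G e f := by
  have hdeg : H.degree (φ.dartEquiv f).snd = G.degree f.snd := φ.degree_eq f.snd
  simp only [groverMatrix, hdeg]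
  simp [dartEquiv, Dart.ext_iff, Dart.symm, Prod.ext_iff]

theorem orderOf_groverMatrix (φ : G ≃g H) :
    orderOf (groverMatrix H) = orderOf (groverMatrix G) := by
  have hU : groverMatrix H = reindex φ.dartEquiv φ.dartEquiv (groverMatrix G) := by
    ext i j
    rw [reindex_apply, submatrix_apply, ← groverMatrix_apply_dartEquiv φ,
      Equiv.apply_symm_apply, Equiv.apply_symm_apply]
  rw [hU]
  exact (reindexRingEquiv ℂ φ.dartEquiv).toMulEquiv.orderOf_eq _

end SimpleGraph.Iso

theorem SimpleGraph.nonempty_iso_cycleGraph_three_of_eq_top {V : Type*} [Fintype V]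
    [DecidableEq V] {G : SimpleGraph V} [DecidableRel G.Adj] (hG : G = ⊤) {v : V}
    (hv : G.degree v = 2) : Nonempty (G ≃g cycleGraph 3) := by
  subst hG
  have hV : Fintype.card V = 3 := by
    have hdeg : (⊤ : SimpleGraph V).degree v = Fintype.card V - 1 := by
      convert complete_graph_degree v
    omega
  rw [cycleGraph_three_eq_top]
  exact ⟨Iso.completeGraph (Fintype.equivFinOfCardEq hV)⟩

/-- **part of Theorem 3.2.** A finite simple connected graph `G` induces a
`3`-periodic Grover walk iff `G` is isomorphic to the cycle graph `C₃`. -/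
theorem three_periodic_iff_cycleGraph_three {V : Type*} [Fintype V] [DecidableEq V]
    (G : SimpleGraph V) [DecidableRel G.Adj] (hG : G.Connected) :
    InducesPeriodicGroverWalk G 3 ↔ Nonempty (G ≃g SimpleGraph.cycleGraph 3) := by
  rw [inducesPeriodicGroverWalk_iff_orderOf_eq three_pos]
  constructor
  · intro h
    obtain ⟨hU3, hU1⟩ := orderOf_eq_prime_iff.1 h
    have hU := groverMatrix_pow_three_eq_one_iff.1 hU3
    have htop : G = ⊤ := hG.eq_top_of_adj_of_adj fun _ _ _ =>
      adj_of_groverMatrix_mul_self_eq_transpose hU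
    obtain ⟨e⟩ := groverMatrix_ne_one_iff.1 hU1
    obtain hdeg | hdeg :=
      degree_eq_two_or_degree_eq_two_of_groverMatrix_mul_self_eq_transpose hU e.adj <;>
    exact nonempty_iso_cycleGraph_three_of_eq_top htop hdeg
  · rintro ⟨φ⟩
    rw [← φ.orderOf_groverMatrix, orderOf_groverMatrix_cycleGraph_three]
end

section
/- A finite simple connected graph G with n vertices and at least one edge is a complete bipartite graph if and only if the spectrum of its transition matrix T consists of the eigenvalue −1 with multiplicity 1, the eigenvalue 0 with multiplicity n − 2, and the eigenvalue 1 with multiplicity 1. -/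
open Matrix SimpleGraph

/-!
Write `T = D⁻¹ A` with `D` the diagonal degree matrix. Since `D T = A` is symmetric, `T` is
self-adjoint for the degree-weighted inner product, so `ker T² = ker T`; together with
Cayley–Hamilton for `(X + 1)(X - 1)X^(n-2)` this forces `T³ = T`. As `T` is entrywise
nonnegative and positive exactly on edges, `T³ = T` means that every walk of length three joins
adjacent vertices. In a connected graph this makes "adjacent to a fixed vertex `b`" a
bipartition in which every cross pair is an edge.

Conversely, the transition matrix of `K_{r,s}` factors as `U W` through a two-dimensional space
with `W U = !![0, 1; 1, 0]`, whose characteristic polynomial is `X² - 1`.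
-/

theorem mul_eq_zero_of_pow_succ_mul_eq_zero {M : Type*} [MonoidWithZero M] {a : M}
    (ha : ∀ b, a * (a * b) = 0 → a * b = 0) {b : M} : ∀ k : ℕ, a ^ (k + 1) * b = 0 → a * b = 0
  | 0, h => by rwa [zero_add, pow_one] at h
  | k + 1, h => mul_eq_zero_of_pow_succ_mul_eq_zero ha k <| by
      simp only [pow_succ', mul_assoc] at h ⊢
      exact ha _ h

theorem Matrix.mul_apply_pos_of_nonneg {l m n R : Type*} [Fintype m] [Semiring R] [PartialOrder R]
    [IsStrictOrderedRing R] {A : Matrix l m R} {B : Matrix m n R} (hA : ∀ i j, 0 ≤ A i j)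
    (hB : ∀ i j, 0 ≤ B i j) {i : l} {k : m} {j : n} (hik : 0 < A i k) (hkj : 0 < B k j) :
    0 < (A * B) i j :=
  Finset.sum_pos' (fun l _ => mul_nonneg (hA i l) (hB l j)) ⟨k, Finset.mem_univ k, mul_pos hik hkj⟩

namespace SimpleGraph

variable {V : Type*} {G : SimpleGraph V}

theorem Walk.eq_or_adj_or_exists_adj_adj
    (h3 : ∀ ⦃u a b v⦄, G.Adj u a → G.Adj a b → G.Adj b v → G.Adj u v) {u v : V}
    (p : G.Walk u v) : u = v ∨ G.Adj u v ∨ ∃ z, G.Adj u z ∧ G.Adj z v := by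
  induction p with
  | nil => exact .inl rfl
  | cons hua _ ih =>
    rcases ih with rfl | hav | ⟨z, haz, hzv⟩
    · exact .inr (.inl hua)
    · exact .inr (.inr ⟨_, hua, hav⟩)
    · exact .inr (.inl (h3 hua haz hzv))

theorem Connected.adj_iff_xor_adj (hG : G.Connected)
    (h3 : ∀ ⦃u a b v⦄, G.Adj u a → G.Adj a b → G.Adj b v → G.Adj u v) (b u v : V) :
    G.Adj u v ↔ Xor (G.Adj b u) (G.Adj b v) := by
  have hnear : ∀ w, ¬ G.Adj b w → w ≠ b → ∃ z, G.Adj b z ∧ G.Adj z w := fun w hbw hwb =>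
    (((hG.preconnected b w).some.eq_or_adj_or_exists_adj_adj h3).resolve_left
      hwb.symm).resolve_left hbw
  by_cases hbu : G.Adj b u <;> by_cases hbv : G.Adj b v <;> simp only [Xor, hbu, hbv,
    not_true_eq_false, not_false_eq_true, and_true, and_false, and_self, or_self, or_true,
    or_false, iff_true, iff_false]
  · exact fun huv => G.loopless.irrefl b (h3 hbu huv hbv.symm)
  · obtain rfl | hvb := eq_or_ne v b
    · exact hbu.symm
    obtain ⟨z, hbz, hzv⟩ := hnear v hbv hvb
    exact h3 hbu.symm hbz hzv
  · obtain rfl | hub := eq_or_ne u b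
    · exact hbv
    obtain ⟨z, hbz, hzu⟩ := hnear u hbu hub
    exact (h3 hbv.symm hbz hzu).symm
  · intro huv
    obtain ⟨z, hbz, hzu⟩ := hnear u hbu (by rintro rfl; exact hbv huv)
    exact hbv (h3 hbz hzu huv)

def isoCompleteBipartiteGraphOfAdjIff (p : V → Prop) [DecidablePred p]
    (h : ∀ u v, G.Adj u v ↔ Xor (p u) (p v)) :
    completeBipartiteGraph {v // p v} {v // ¬ p v} ≃g G where
  toEquiv := Equiv.sumCompl p
  map_rel_iff' := by
    rintro (⟨u, hu⟩ | ⟨u, hu⟩) (⟨v, hv⟩ | ⟨v, hv⟩) <;> simp [h, hu, hv]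

theorem Connected.exists_iso_completeBipartiteGraph [Fintype V] (hG : G.Connected)
    (h3 : ∀ ⦃u a b v⦄, G.Adj u a → G.Adj a b → G.Adj b v → G.Adj u v) {a b : V}
    (hab : G.Adj a b) : ∃ r s : ℕ, 0 < r ∧ 0 < s ∧
      Nonempty (G ≃g completeBipartiteGraph (Fin r) (Fin s)) := by
  classical
  refine ⟨Fintype.card {v // G.Adj b v}, Fintype.card {v // ¬ G.Adj b v},
    Fintype.card_pos_iff.mpr ⟨⟨a, hab.symm⟩⟩, Fintype.card_pos_iff.mpr ⟨⟨b, G.loopless.irrefl b⟩⟩,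
    ⟨?_⟩⟩
  exact (isoCompleteBipartiteGraphOfAdjIff _ (hG.adj_iff_xor_adj h3 b)).symm.trans
    (completeBipartiteGraphCongr (Fintype.equivFin _) (Fintype.equivFin _))

end SimpleGraph

section transitionMatrix

variable {V : Type*} [Fintype V] {G : SimpleGraph V} [DecidableRel G.Adj]

theorem transitionMatrix_nonneg (u v : V) : 0 ≤ transitionMatrix G u v := by
  unfold transitionMatrix; split_ifs <;> positivity

theorem transitionMatrix_pos_iff {u v : V} : 0 < transitionMatrix G u v ↔ G.Adj u v := by
  unfold transitionMatrix
  split_ifs with huv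
  · simpa [huv] using G.degree_pos_iff_exists_adj u |>.mpr ⟨v, huv⟩
  · simp [huv]

theorem reindex_transitionMatrix {W : Type*} [Fintype W] {H : SimpleGraph W} [DecidableRel H.Adj]
    (f : G ≃g H) : reindex f.toEquiv f.toEquiv (transitionMatrix G) = transitionMatrix H := by
  ext x y
  exact if_congr f.symm.map_adj_iff (by rw [← f.symm.degree_eq x]; rfl) rfl

theorem charpoly_transitionMatrix_eq_of_iso [DecidableEq V] {W : Type*} [Fintype W] [DecidableEq W]
    {H : SimpleGraph W} [DecidableRel H.Adj] (f : G ≃g H) :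
    (transitionMatrix G).charpoly = (transitionMatrix H).charpoly := by
  rw [← reindex_transitionMatrix f, charpoly_reindex]

variable [DecidableEq V]

-- At an isolated vertex both sides have a zero row, using `(0 : ℝ)⁻¹ = 0`.
theorem transitionMatrix_eq_diagonal_mul_adjMatrix :
    transitionMatrix G = diagonal (fun u => (G.degree u : ℝ)⁻¹) * G.adjMatrix ℝ := by
  ext u v
  rw [diagonal_mul, adjMatrix_apply, transitionMatrix]
  split_ifs <;> simp

theorem diagonal_degree_mul_transitionMatrix :
    diagonal (fun u => (G.degree u : ℝ)) * transitionMatrix G = G.adjMatrix ℝ := by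
  ext u v
  rw [diagonal_mul, transitionMatrix, adjMatrix_apply]
  split_ifs with huv
  · have : G.degree u ≠ 0 := (G.degree_pos_iff_exists_adj u |>.mpr ⟨v, huv⟩).ne'
    field_simp
  · rw [mul_zero]

theorem transitionMatrix_mulVec_eq_zero_of_mulVec_mulVec_eq_zero {x : V → ℝ}
    (h : transitionMatrix G *ᵥ (transitionMatrix G *ᵥ x) = 0) : transitionMatrix G *ᵥ x = 0 := by
  set D : Matrix V V ℝ := diagonal fun u => (G.degree u : ℝ)
  have hD : D.PosSemidef := PosSemidef.diagonal fun u => Nat.cast_nonneg _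
  have hA : D * transitionMatrix G = G.adjMatrix ℝ := diagonal_degree_mul_transitionMatrix
  have hquad : star (transitionMatrix G *ᵥ x) ⬝ᵥ D *ᵥ (transitionMatrix G *ᵥ x) = 0 := calc
    _ = (transitionMatrix G *ᵥ x) ⬝ᵥ (G.adjMatrix ℝ *ᵥ x) := by
      rw [star_trivial, mulVec_mulVec, hA]
    _ = (G.adjMatrix ℝ *ᵥ (transitionMatrix G *ᵥ x)) ⬝ᵥ x := by
      rw [dotProduct_mulVec, ← mulVec_transpose, G.isSymm_adjMatrix]
    _ = 0 := by rw [← hA, ← mulVec_mulVec, h, mulVec_zero, zero_dotProduct]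
  have hAx : G.adjMatrix ℝ *ᵥ x = 0 := by
    rw [← hA, ← mulVec_mulVec]; exact (hD.dotProduct_mulVec_zero_iff _).mp hquad
  rw [transitionMatrix_eq_diagonal_mul_adjMatrix, ← mulVec_mulVec, hAx, mulVec_zero]

theorem transitionMatrix_mul_eq_zero_of_mul_mul_eq_zero {N : Matrix V V ℝ}
    (h : transitionMatrix G * (transitionMatrix G * N) = 0) : transitionMatrix G * N = 0 := by
  refine ext_iff_mulVec.mpr fun x => ?_
  rw [zero_mulVec, ← mulVec_mulVec]
  refine transitionMatrix_mulVec_eq_zero_of_mulVec_mulVec_eq_zero ?_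
  rw [mulVec_mulVec, mulVec_mulVec, mul_assoc, h, zero_mulVec]

open Polynomial in
theorem transitionMatrix_pow_three_of_charpoly
    (h : (transitionMatrix G).charpoly = (X - C (-1)) * (X - C 1) * X ^ (Fintype.card V - 2)) :
    transitionMatrix G ^ 3 = transitionMatrix G := by
  have hCH : transitionMatrix G ^ (Fintype.card V - 2 + 1) * (transitionMatrix G ^ 2 - 1) = 0 := by
    have hpoly : X ^ (Fintype.card V - 2 + 1) * (X ^ 2 - 1 : ℝ[X]) =
        X * ((X - C (-1)) * (X - C 1) * X ^ (Fintype.card V - 2)) := by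
      rw [map_neg, C_1]; ring
    have := congrArg (aeval (transitionMatrix G)) hpoly
    rw [← h, map_mul, map_mul, aeval_self_charpoly, mul_zero] at this
    simpa using this
  have := mul_eq_zero_of_pow_succ_mul_eq_zero
    (fun _ => transitionMatrix_mul_eq_zero_of_mul_mul_eq_zero) _ hCH
  rwa [mul_sub, mul_one, sub_eq_zero, ← pow_succ'] at this

theorem adj_of_transitionMatrix_pow_three (h : transitionMatrix G ^ 3 = transitionMatrix G)
    ⦃u a b v : V⦄ (hua : G.Adj u a) (hab : G.Adj a b) (hbv : G.Adj b v) : G.Adj u v := by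
  have hT := transitionMatrix_nonneg (G := G)
  have hT2 : ∀ i j, 0 ≤ (transitionMatrix G * transitionMatrix G) i j := fun i j =>
    Finset.sum_nonneg fun l _ => mul_nonneg (hT i l) (hT l j)
  rw [← transitionMatrix_pos_iff, ← h, pow_three']
  exact mul_apply_pos_of_nonneg hT2 hT
    (mul_apply_pos_of_nonneg hT hT (transitionMatrix_pos_iff.mpr hua)
      (transitionMatrix_pos_iff.mpr hab)) (transitionMatrix_pos_iff.mpr hbv)

end transitionMatrix

section completeBipartiteGraph

variable {α β : Type*} [Fintype α] [Fintype β] [DecidableRel (completeBipartiteGraph α β).Adj]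

theorem completeBipartiteGraph_degree_inl (a : α) :
    (completeBipartiteGraph α β).degree (Sum.inl a) = Fintype.card β := by
  have : (completeBipartiteGraph α β).neighborFinset (Sum.inl a) = Finset.univ.map .inr := by
    ext (a' | b) <;> simp
  rw [← card_neighborFinset_eq_degree, this, Finset.card_map, Finset.card_univ]

theorem completeBipartiteGraph_degree_inr (b : β) :
    (completeBipartiteGraph α β).degree (Sum.inr b) = Fintype.card α := by
  have : (completeBipartiteGraph α β).neighborFinset (Sum.inr b) = Finset.univ.map .inl := by
    ext (a | b') <;> simp
  rw [← card_neighborFinset_eq_degree, this, Finset.card_map, Finset.card_univ]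

open Polynomial in
theorem charpoly_transitionMatrix_completeBipartiteGraph [DecidableEq α] [DecidableEq β]
    [Nonempty α] [Nonempty β] :
    (transitionMatrix (completeBipartiteGraph α β)).charpoly =
      (X - C (-1)) * (X - C 1) * X ^ (Fintype.card α + Fintype.card β - 2) := by
  let U : Matrix (α ⊕ β) (Fin 2) ℝ := of (Sum.elim (fun _ => ![1, 0]) (fun _ => ![0, 1]))
  let W : Matrix (Fin 2) (α ⊕ β) ℝ :=
    of ![Sum.elim 0 (fun _ => (Fintype.card β : ℝ)⁻¹), Sum.elim (fun _ => (Fintype.card α : ℝ)⁻¹) 0]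
  have hUW : transitionMatrix (completeBipartiteGraph α β) = U * W := by
    ext (a | b) (a' | b') <;> simp [U, W, transitionMatrix, mul_apply, Fin.sum_univ_two,
      completeBipartiteGraph_degree_inl, completeBipartiteGraph_degree_inr]
  have hWU : W * U = !![0, 1; 1, 0] := by
    ext i j
    fin_cases i <;> fin_cases j <;> simp [U, W, mul_apply, Fintype.sum_sum_type]
  have hcard : Fintype.card (Fin 2) ≤ Fintype.card (α ⊕ β) := by
    simp only [Fintype.card_fin, Fintype.card_sum]
    have := Fintype.card_pos (α := α); have := Fintype.card_pos (α := β); omega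
  rw [hUW, charpoly_mul_comm_of_le _ _ hcard, hWU, charpoly_fin_two, trace_fin_two_of,
    det_fin_two_of, Fintype.card_sum, Fintype.card_fin]
  simp only [add_zero, mul_zero, mul_one, zero_sub, map_zero, zero_mul, sub_zero, map_neg, C_1]
  ring

end completeBipartiteGraph

open Polynomial in
/-- **Lemma 4.3.** A finite simple connected graph `G` with at least one
edge is a complete bipartite graph iff the spectrum of its transition matrix `T`
consists of `-1` with multiplicity `1`, `0` with multiplicity `n - 2`, and `1` with
multiplicity `1`.  Since `T` is diagonalizable, this spectral condition (with
multiplicities) is expressed by its characteristic polynomial. -/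
theorem completeBipartite_iff_transition_charpoly {V : Type*} [Fintype V] [DecidableEq V]
    (G : SimpleGraph V) [DecidableRel G.Adj] (hG : G.Connected)
    (hne : G.edgeSet.Nonempty) :
    (∃ r s : ℕ, 0 < r ∧ 0 < s ∧
        Nonempty (G ≃g completeBipartiteGraph (Fin r) (Fin s))) ↔
      (transitionMatrix G).charpoly =
        (X - C (-1)) * (X - C 1) * X ^ (Fintype.card V - 2) := by
  constructor
  · rintro ⟨r, s, hr, hs, ⟨f⟩⟩
    classical
    have : Nonempty (Fin r) := ⟨⟨0, hr⟩⟩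
    have : Nonempty (Fin s) := ⟨⟨0, hs⟩⟩
    rw [charpoly_transitionMatrix_eq_of_iso f, charpoly_transitionMatrix_completeBipartiteGraph,
      f.card_eq, Fintype.card_sum]
  · intro h
    obtain ⟨a, b, hab⟩ := ne_bot_iff_exists_adj.mp (edgeSet_nonempty.mp hne)
    exact hG.exists_iso_completeBipartiteGraph
      (adj_of_transitionMatrix_pow_three (transitionMatrix_pow_three_of_charpoly h)) hab
end

section
/- For every integer k ≥ 2, the path graph P_k on k vertices induces a 2(k−1)-periodic Grover walk; that is, the Grover transfer matrix U of P_k satisfies U^{2(k−1)} = I while U^j ≠ I for all 1 ≤ j < 2(k−1). -/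
open Matrix SimpleGraph

instance pathGraph.adjDecidable (n : ℕ) : DecidableRel (SimpleGraph.pathGraph n).Adj :=
  fun _ _ => decidable_of_iff _ SimpleGraph.pathGraph_adj.symm

/-! ### Auxiliary material: the Grover walk on a path is a cyclic shift on darts -/

/-- Degree of a vertex of the path graph `P_{n+1}`. -/
lemma pathGraph_degree (n : ℕ) (hn : 0 < n) (v : Fin (n + 1)) :
    (SimpleGraph.pathGraph (n + 1)).degree v = if v.val = 0 ∨ v.val = n then 1 else 2 := by
  rw [← SimpleGraph.card_neighborFinset_eq_degree]
  by_cases h0 : v.val = 0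
  · rw [if_pos (Or.inl h0)]
    have hset : (SimpleGraph.pathGraph (n + 1)).neighborFinset v = {⟨1, by omega⟩} := by
      ext u
      have hu := u.isLt
      simp only [SimpleGraph.mem_neighborFinset, SimpleGraph.pathGraph_adj,
        Finset.mem_singleton, Fin.ext_iff]
      omega
    rw [hset, Finset.card_singleton]
  · by_cases h1 : v.val = n
    · rw [if_pos (Or.inr h1)]
      have hset : (SimpleGraph.pathGraph (n + 1)).neighborFinset v = {⟨n - 1, by omega⟩} := by
        ext u
        have hu := u.isLt
        simp only [SimpleGraph.mem_neighborFinset, SimpleGraph.pathGraph_adj,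
          Finset.mem_singleton, Fin.ext_iff]
        omega
      rw [hset, Finset.card_singleton]
    · rw [if_neg (by tauto)]
      have hv := v.isLt
      have hset : (SimpleGraph.pathGraph (n + 1)).neighborFinset v
          = {⟨v.val - 1, by omega⟩, ⟨v.val + 1, by omega⟩} := by
        ext u
        have hu := u.isLt
        simp only [SimpleGraph.mem_neighborFinset, SimpleGraph.pathGraph_adj,
          Finset.mem_insert, Finset.mem_singleton, Fin.ext_iff]
        omega
      rw [hset, Finset.card_pair (by simp only [ne_eq, Fin.ext_iff]; omega)]

/-- The dart of `P_{n+1}` at cyclic position `a`. -/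
def pathToDart (n : ℕ) [NeZero (2 * n)] (a : ZMod (2 * n)) :
    (SimpleGraph.pathGraph (n + 1)).Dart :=
  if h : a.val < n then
    ⟨(⟨a.val, by omega⟩, ⟨a.val + 1, by omega⟩), by
      rw [SimpleGraph.pathGraph_adj]; exact Or.inl rfl⟩
  else
    ⟨(⟨2 * n - a.val, by omega⟩, ⟨2 * n - a.val - 1, by omega⟩), by
      have h2 : a.val < 2 * n := ZMod.val_lt a
      rw [SimpleGraph.pathGraph_adj]
      refine Or.inr ?_
      show 2 * n - a.val - 1 + 1 = 2 * n - a.val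
      omega⟩

/-- The cyclic position of a dart of `P_{n+1}`. -/
def pathOfDart (n : ℕ) (d : (SimpleGraph.pathGraph (n + 1)).Dart) : ZMod (2 * n) :=
  if d.fst.val + 1 = d.snd.val then (d.fst.val : ZMod (2 * n))
  else ((2 * n - d.fst.val : ℕ) : ZMod (2 * n))

lemma pathToDart_fst (n : ℕ) [NeZero (2 * n)] (a : ZMod (2 * n)) :
    (pathToDart n a).fst.val = if a.val < n then a.val else 2 * n - a.val := by
  unfold pathToDart
  split_ifs with h <;> rfl

lemma pathToDart_snd (n : ℕ) [NeZero (2 * n)] (a : ZMod (2 * n)) :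
    (pathToDart n a).snd.val = if a.val < n then a.val + 1 else 2 * n - a.val - 1 := by
  unfold pathToDart
  split_ifs with h <;> rfl

lemma pathOfDart_pathToDart (n : ℕ) [NeZero (2 * n)] (a : ZMod (2 * n)) :
    pathOfDart n (pathToDart n a) = a := by
  have h2 : a.val < 2 * n := ZMod.val_lt a
  have hval : ((a.val : ℕ) : ZMod (2 * n)) = a := by rw [ZMod.natCast_val, ZMod.cast_id]
  rw [pathOfDart, pathToDart_fst, pathToDart_snd]
  by_cases h : a.val < n
  · simp only [if_pos h, if_pos rfl]
    exact hval
  · simp only [if_neg h]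
    rw [if_neg (by omega), show 2 * n - (2 * n - a.val) = a.val by omega, hval]

lemma pathToDart_pathOfDart (n : ℕ) [NeZero (2 * n)]
    (d : (SimpleGraph.pathGraph (n + 1)).Dart) : pathToDart n (pathOfDart n d) = d := by
  have hn : 0 < n := by have := NeZero.ne (2 * n); omega
  have hadj := d.adj
  rw [SimpleGraph.pathGraph_adj] at hadj
  have hf := d.fst.isLt
  have hs := d.snd.isLt
  have key : ∀ e : (SimpleGraph.pathGraph (n + 1)).Dart,
      e.fst.val = d.fst.val → e.snd.val = d.snd.val → e = d := by
    intro e h1 h2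
    apply SimpleGraph.Dart.ext
    exact Prod.ext (Fin.ext h1) (Fin.ext h2)
  rcases hadj with hr | hl
  · have hflt : d.fst.val < n := by omega
    have hcast : (pathOfDart n d).val = d.fst.val := by
      rw [pathOfDart, if_pos hr]
      exact ZMod.val_cast_of_lt (by omega)
    apply key
    · rw [pathToDart_fst, hcast, if_pos hflt]
    · rw [pathToDart_snd, hcast, if_pos hflt]; omega
  · have hcond : ¬(d.fst.val + 1 = d.snd.val) := by omega
    have hcast : (pathOfDart n d).val = 2 * n - d.fst.val := by
      rw [pathOfDart, if_neg hcond]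
      exact ZMod.val_cast_of_lt (by omega)
    have hge : ¬((pathOfDart n d).val < n) := by rw [hcast]; omega
    apply key
    · rw [pathToDart_fst, if_neg hge, hcast]; omega
    · rw [pathToDart_snd, if_neg hge, hcast]; omega

/-- The darts of `P_{n+1}` are in bijection with `ZMod (2n)`. -/
def pathDartEquiv (n : ℕ) [NeZero (2 * n)] :
    ZMod (2 * n) ≃ (SimpleGraph.pathGraph (n + 1)).Dart :=
  ⟨pathToDart n, pathOfDart n, pathOfDart_pathToDart n, pathToDart_pathOfDart n⟩

/-- The cyclic shift matrix on `ZMod N`. -/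
def cycMatrix (N : ℕ) : Matrix (ZMod N) (ZMod N) ℂ :=
  Matrix.of fun a b => if a = b + 1 then 1 else 0

lemma cycMatrix_pow (N : ℕ) [NeZero N] (j : ℕ) :
    cycMatrix N ^ j = Matrix.of (fun a b => if a = b + (j : ZMod N) then 1 else 0) := by
  induction j with
  | zero =>
    rw [pow_zero]
    ext a b
    simp [Matrix.one_apply]
  | succ j ih =>
    rw [pow_succ, ih]
    ext a b
    simp only [Matrix.mul_apply, cycMatrix, Matrix.of_apply]
    rw [Finset.sum_eq_single (b + 1)]
    · rw [if_pos rfl, mul_one]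
      have h : b + 1 + (j : ZMod N) = b + ((j + 1 : ℕ) : ZMod N) := by push_cast; ring
      rw [h]
    · intro c _ hc
      rw [if_neg hc, mul_zero]
    · intro h
      exact absurd (Finset.mem_univ _) h

lemma cycMatrix_pow_eq_one_iff (N : ℕ) [NeZero N] (j : ℕ) :
    cycMatrix N ^ j = 1 ↔ (j : ZMod N) = 0 := by
  rw [cycMatrix_pow]
  constructor
  · intro h
    by_contra hj
    have h2 : (Matrix.of (fun a b => if a = b + (j : ZMod N) then 1 else 0) : Matrix _ _ ℂ)
        ((j : ZMod N)) 0 = (1 : Matrix (ZMod N) (ZMod N) ℂ) ((j : ZMod N)) 0 := by rw [h]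
    rw [Matrix.of_apply, zero_add, if_pos rfl, Matrix.one_apply, if_neg hj] at h2
    exact one_ne_zero h2
  · intro h
    ext a b
    rw [Matrix.of_apply, h, add_zero, Matrix.one_apply]

/-- The Grover matrix of the path, transported along `pathDartEquiv`, is the cyclic shift. -/
lemma groverMatrix_pathToDart (n : ℕ) [NeZero (2 * n)] (a b : ZMod (2 * n)) :
    groverMatrix (SimpleGraph.pathGraph (n + 1)) (pathToDart n a) (pathToDart n b)
      = if a = b + 1 then 1 else 0 := by
  have hn : 0 < n := by have := NeZero.ne (2 * n); omega
  have ha : a.val < 2 * n := ZMod.val_lt a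
  have hb : b.val < 2 * n := ZMod.val_lt b
  have key : ∀ x y : ZMod (2 * n), x.val = y.val → x = y := by
    intro x y h
    have h2 := congrArg (Nat.cast : ℕ → ZMod (2 * n)) h
    rwa [ZMod.natCast_val, ZMod.natCast_val, ZMod.cast_id, ZMod.cast_id] at h2
  have hv1 : (1 : ZMod (2 * n)).val = 1 := by
    rw [← Nat.cast_one]
    exact ZMod.val_cast_of_lt (by omega)
  have hz : (a = b + 1) ↔ a.val = (b.val + 1) % (2 * n) := by
    constructor
    · rintro rfl; rw [ZMod.val_add, hv1]
    · intro h; apply key; rw [ZMod.val_add, hv1]; exact h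
  have hsym : (pathToDart n b = (pathToDart n a).symm)
      ↔ ((pathToDart n b).fst.val = (pathToDart n a).snd.val ∧
         (pathToDart n b).snd.val = (pathToDart n a).fst.val) := by
    constructor
    · rintro h; rw [h]; exact ⟨rfl, rfl⟩
    · rintro ⟨h1, h2⟩
      apply SimpleGraph.Dart.ext
      rw [SimpleGraph.Dart.symm_toProd]
      exact Prod.ext (Fin.ext h1) (Fin.ext h2)
  have hc2 : ((pathToDart n b).snd = (pathToDart n a).fst)
      ↔ ((pathToDart n b).snd.val = (pathToDart n a).fst.val) := Fin.ext_iff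
  simp only [groverMatrix, hsym, hc2, pathGraph_degree n hn, hz, pathToDart_fst, pathToDart_snd]
  by_cases hA : a.val < n <;> by_cases hB : b.val < n <;>
      simp only [hA, hB, if_true, if_false, false_or, or_false]
  · rw [Nat.mod_eq_of_lt (show b.val + 1 < 2 * n by omega)]
    split_ifs <;>
        first
          | (norm_num; done)
          | (exfalso; omega)
          | (exfalso; try simp only [false_or, or_false, not_or] at *; omega)
  · by_cases hb1 : b.val = 2 * n - 1
    · rw [show (b.val + 1) % (2 * n) = 0 by
        rw [show b.val + 1 = 2 * n by omega]; exact Nat.mod_self _]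
      split_ifs <;>
        first
          | (norm_num; done)
          | (exfalso; omega)
          | (exfalso; try simp only [false_or, or_false, not_or] at *; omega)
    · rw [Nat.mod_eq_of_lt (show b.val + 1 < 2 * n by omega)]
      split_ifs <;>
        first
          | (norm_num; done)
          | (exfalso; omega)
          | (exfalso; try simp only [false_or, or_false, not_or] at *; omega)
  · rw [Nat.mod_eq_of_lt (show b.val + 1 < 2 * n by omega)]
    split_ifs <;>
        first
          | (norm_num; done)
          | (exfalso; omega)
          | (exfalso; try simp only [false_or, or_false, not_or] at *; omega)
  · by_cases hb1 : b.val = 2 * n - 1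
    · rw [show (b.val + 1) % (2 * n) = 0 by
        rw [show b.val + 1 = 2 * n by omega]; exact Nat.mod_self _]
      split_ifs <;>
        first
          | (norm_num; done)
          | (exfalso; omega)
          | (exfalso; try simp only [false_or, or_false, not_or] at *; omega)
    · rw [Nat.mod_eq_of_lt (show b.val + 1 < 2 * n by omega)]
      split_ifs <;>
        first
          | (norm_num; done)
          | (exfalso; omega)
          | (exfalso; try simp only [false_or, or_false, not_or] at *; omega)

lemma groverMatrix_pathGraph_eq (n : ℕ) [NeZero (2 * n)] :
    groverMatrix (SimpleGraph.pathGraph (n + 1))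
      = Matrix.reindexAlgEquiv ℂ ℂ (pathDartEquiv n) (cycMatrix (2 * n)) := by
  ext e f
  rw [Matrix.reindexAlgEquiv_apply, Matrix.reindex_apply, Matrix.submatrix_apply]
  have he : (pathDartEquiv n).symm e = pathOfDart n e := rfl
  have hf : (pathDartEquiv n).symm f = pathOfDart n f := rfl
  rw [he, hf]
  conv_lhs => rw [← pathToDart_pathOfDart n e, ← pathToDart_pathOfDart n f]
  rw [groverMatrix_pathToDart]
  rfl

/-- **Lemma 5.1.** For `k ≥ 2`, the path graph `P_k` on `k` vertices
induces a `2(k-1)`-periodic Grover walk. -/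
theorem pathGraph_inducesPeriodicGroverWalk (k : ℕ) (hk : 2 ≤ k) :
    InducesPeriodicGroverWalk (SimpleGraph.pathGraph k) (2 * (k - 1)) := by
  obtain ⟨n, rfl⟩ : ∃ n, k = n + 1 := ⟨k - 1, by omega⟩
  haveI : NeZero (2 * n) := ⟨by omega⟩
  have hpow : ∀ j : ℕ,
      (groverMatrix (SimpleGraph.pathGraph (n + 1)) ^ j = 1 ↔ (2 * n) ∣ j) := by
    intro j
    rw [groverMatrix_pathGraph_eq n, ← map_pow]
    constructor
    · intro h
      have h1 : cycMatrix (2 * n) ^ j = 1 := by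
        apply (Matrix.reindexAlgEquiv ℂ ℂ (pathDartEquiv n)).injective
        rw [h, _root_.map_one]
      rw [cycMatrix_pow_eq_one_iff] at h1
      exact (ZMod.natCast_eq_zero_iff j (2 * n)).mp h1
    · intro h
      rw [(cycMatrix_pow_eq_one_iff (2 * n) j).mpr
        ((ZMod.natCast_eq_zero_iff j (2 * n)).mpr h), _root_.map_one]
  simp only [Nat.add_sub_cancel]
  constructor
  · exact (hpow (2 * n)).mpr dvd_rfl
  · intro j hj1 hj2 hcon
    have := Nat.le_of_dvd (by omega) ((hpow j).mp hcon)
    omega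
end

section
/- Let G be a finite simple connected graph with at least one edge and let k be a positive integer. If G induces a k-periodic Grover walk, then the subdivision graph S(G) induces a 2k-periodic Grover walk. -/
open Matrix SimpleGraph

/-- The subdivision graph `S(G)` of `G`, on vertex set `V ⊔ E(G)`:
a vertex `v : V` is adjacent to an edge-vertex `e : E(G)` exactly when `v` is an
endpoint of `e`, and there are no other adjacencies. -/
def subdivisionGraph {V : Type*} (G : SimpleGraph V) :
    SimpleGraph (V ⊕ G.edgeSet) where
  Adj a b :=
    match a, b with
    | Sum.inl v, Sum.inr e => v ∈ (e : Sym2 V)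
    | Sum.inr e, Sum.inl v => v ∈ (e : Sym2 V)
    | _, _ => False
  symm := ⟨by rintro (v | e) (w | f) h <;> exact h⟩
  loopless := ⟨by rintro (v | e) h <;> exact h⟩

instance subdivisionGraph.adjDecidable {V : Type*} [DecidableEq V] (G : SimpleGraph V) :
    DecidableRel (subdivisionGraph G).Adj := fun a b =>
  match a, b with
  | Sum.inl v, Sum.inr e => inferInstanceAs (Decidable (v ∈ (e : Sym2 V)))
  | Sum.inr e, Sum.inl v => inferInstanceAs (Decidable (v ∈ (e : Sym2 V)))
  | Sum.inl _, Sum.inl _ => inferInstanceAs (Decidable False)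
  | Sum.inr _, Sum.inr _ => inferInstanceAs (Decidable False)

/-!
Every dart `d` of `G` is split in `S(G)` into a first half `o(d) → e` and a second half
`e → t(d)`, where `e` is the edge-vertex of `d`. Edge-vertices have degree 2, so the Grover walk
passes straight through them (the first half of `d` is sent to its second half with amplitude
`2/2 = 1`), while at an original vertex it acts as `U(G)` does. Ordering the darts of
`S(G)` as (second halves, first halves) gives `U(S(G)) = [[0, 1], [U(G), 0]]`. Its square is
`diag(U(G), U(G))` and its odd powers have vanishing diagonal blocks, so `U(S(G))^j = 1` exactly
when `j = 2i` with `U(G)^i = 1`.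
-/

def IsExactPeriod {M : Type*} [Monoid M] (x : M) (k : ℕ) : Prop :=
  x ^ k = 1 ∧ ∀ j : ℕ, 1 ≤ j → j < k → x ^ j ≠ 1

theorem isExactPeriod_map_iff {M N F : Type*} [Monoid M] [Monoid N] [EquivLike F M N]
    [MulEquivClass F M N] (f : F) {x : M} {k : ℕ} :
    IsExactPeriod (f x) k ↔ IsExactPeriod x k := by
  simp only [IsExactPeriod, ← map_pow, ne_eq, EmbeddingLike.map_eq_one_iff]

section Blocks

variable {ι R : Type*} [Fintype ι] [DecidableEq ι] [Semiring R] (A : Matrix ι ι R)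

theorem fromBlocks_zero_one_pow_two_mul (i : ℕ) :
    fromBlocks 0 (1 : Matrix ι ι R) A 0 ^ (2 * i) = fromBlocks (A ^ i) 0 0 (A ^ i) := by
  rw [pow_mul, sq, fromBlocks_multiply]
  simpa using fromBlocks_diagonal_pow A A i

theorem fromBlocks_zero_one_pow_two_mul_add_one_ne_one [Nonempty ι] [Nontrivial R] (i : ℕ) :
    fromBlocks 0 (1 : Matrix ι ι R) A 0 ^ (2 * i + 1) ≠ 1 := by
  rw [pow_succ, fromBlocks_zero_one_pow_two_mul, fromBlocks_multiply, ← fromBlocks_one]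
  intro h
  obtain ⟨a⟩ := ‹Nonempty ι›
  simpa using congr($h (Sum.inl a) (Sum.inl a))

theorem IsExactPeriod.fromBlocks_zero_one [Nonempty ι] [Nontrivial R] {k : ℕ}
    (h : IsExactPeriod A k) : IsExactPeriod (fromBlocks 0 (1 : Matrix ι ι R) A 0) (2 * k) := by
  refine ⟨by rw [fromBlocks_zero_one_pow_two_mul, h.1, fromBlocks_one], fun j hj hjk => ?_⟩
  obtain ⟨i, rfl | rfl⟩ := Nat.even_or_odd' j
  · rw [fromBlocks_zero_one_pow_two_mul, ← fromBlocks_one, Ne, fromBlocks_inj]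
    exact fun hi => h.2 i (by omega) (by omega) hi.1
  · exact fromBlocks_zero_one_pow_two_mul_add_one_ne_one A i

end Blocks

theorem groverMatrix_apply {V : Type*} [Fintype V] [DecidableEq V] (G : SimpleGraph V)
    [DecidableRel G.Adj] (e f : G.Dart) :
    groverMatrix G e f =
      if f.snd = e.fst then 2 / (G.degree f.snd : ℂ) - if f = e.symm then 1 else 0 else 0 := by
  unfold groverMatrix
  split_ifs with h₁ h₂ h₂ <;> simp_all

namespace subdivisionGraph

variable {V : Type*} {G : SimpleGraph V}

@[simp] theorem adj_inr_inl (e : G.edgeSet) (v : V) :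
    (subdivisionGraph G).Adj (Sum.inr e) (Sum.inl v) ↔ v ∈ (e : Sym2 V) := Iff.rfl

@[simp] theorem not_adj_inl_inl (v w : V) : ¬(subdivisionGraph G).Adj (Sum.inl v) (Sum.inl w) :=
  id

@[simp] theorem not_adj_inr_inr (e f : G.edgeSet) :
    ¬(subdivisionGraph G).Adj (Sum.inr e) (Sum.inr f) :=
  id

def firstHalf (d : G.Dart) : (subdivisionGraph G).Dart :=
  ⟨(Sum.inl d.fst, Sum.inr ⟨d.edge, d.edge_mem⟩), Sym2.mem_mk_left _ _⟩

def secondHalf (d : G.Dart) : (subdivisionGraph G).Dart :=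
  ⟨(Sum.inr ⟨d.edge, d.edge_mem⟩, Sum.inl d.snd), Sym2.mem_mk_right _ _⟩

@[simp] theorem firstHalf_fst (d : G.Dart) : (firstHalf d).fst = Sum.inl d.fst := rfl
@[simp] theorem firstHalf_snd (d : G.Dart) :
    (firstHalf d).snd = Sum.inr ⟨d.edge, d.edge_mem⟩ := rfl
@[simp] theorem secondHalf_fst (d : G.Dart) :
    (secondHalf d).fst = Sum.inr ⟨d.edge, d.edge_mem⟩ := rfl
@[simp] theorem secondHalf_snd (d : G.Dart) : (secondHalf d).snd = Sum.inl d.snd := rfl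

theorem firstHalf_symm (d : G.Dart) : (firstHalf d).symm = secondHalf d.symm :=
  Dart.ext _ _ (Prod.ext (congrArg Sum.inr (Subtype.ext d.edge_symm.symm)) rfl)

theorem secondHalf_symm (d : G.Dart) : (secondHalf d).symm = firstHalf d.symm :=
  Dart.ext _ _ (Prod.ext rfl (congrArg Sum.inr (Subtype.ext d.edge_symm.symm)))

theorem firstHalf_injective : Function.Injective (firstHalf (G := G)) := by
  intro d d' h
  have hfst : d.fst = d'.fst := Sum.inl_injective congr(($h).fst)
  have hedge : d.edge = d'.edge := congrArg Subtype.val (Sum.inr_injective congr(($h).snd))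
  refine Dart.ext _ _ (Prod.ext hfst ?_)
  rw [Dart.edge, Dart.edge, hfst] at hedge
  exact Sym2.congr_right.mp hedge

theorem secondHalf_injective : Function.Injective (secondHalf (G := G)) := by
  intro d d' h
  have hsnd : d.snd = d'.snd := Sum.inl_injective congr(($h).snd)
  have hedge : d.edge = d'.edge := congrArg Subtype.val (Sum.inr_injective congr(($h).fst))
  refine Dart.ext _ _ (Prod.ext ?_ hsnd)
  rw [Dart.edge, Dart.edge, hsnd] at hedge
  exact Sym2.congr_left.mp hedge

theorem halves_surjective (a : (subdivisionGraph G).Dart) :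
    (∃ d, secondHalf d = a) ∨ ∃ d, firstHalf d = a := by
  rcases a with ⟨⟨v | ⟨e, he⟩, w | ⟨e, he⟩⟩, h⟩
  · exact absurd h (not_adj_inl_inl v w)
  · obtain ⟨u, rfl⟩ := Sym2.mem_iff_exists.mp h
    exact .inr ⟨⟨(v, u), he⟩, rfl⟩
  · obtain ⟨u, rfl⟩ := Sym2.mem_iff_exists.mp h
    refine .inl ⟨⟨(u, w), (G.mem_edgeSet.mp he).symm⟩, ?_⟩
    exact Dart.ext _ _ (Prod.ext (congrArg Sum.inr (Subtype.ext Sym2.eq_swap)) rfl)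
  · exact absurd h (not_adj_inr_inr _ _)

noncomputable def dartEquiv : G.Dart ⊕ G.Dart ≃ (subdivisionGraph G).Dart :=
  Equiv.ofBijective (Sum.elim secondHalf firstHalf)
    ⟨Sum.elim_injective.mpr ⟨secondHalf_injective, firstHalf_injective,
        fun d d' h => Sum.inr_ne_inl congr(($h).fst)⟩,
      fun a => by
        rcases halves_surjective a with ⟨d, rfl⟩ | ⟨d, rfl⟩
        exacts [⟨.inl d, rfl⟩, ⟨.inr d, rfl⟩]⟩

@[simp] theorem dartEquiv_inl (d : G.Dart) : dartEquiv (.inl d) = secondHalf d := rfl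
@[simp] theorem dartEquiv_inr (d : G.Dart) : dartEquiv (.inr d) = firstHalf d := rfl

variable [Fintype V] [DecidableEq V] [DecidableRel G.Adj]

theorem degree_inl (v : V) : (subdivisionGraph G).degree (Sum.inl v) = G.degree v := by
  rw [← card_neighborSet_eq_degree, ← card_incidenceSet_eq_degree]
  refine Fintype.card_congr
    { toFun := fun
        | ⟨Sum.inr e, h⟩ => ⟨e, e.2, h⟩
        | ⟨Sum.inl w, h⟩ => absurd h (not_adj_inl_inl (G := G) v w)
      invFun := fun e => ⟨Sum.inr ⟨e.1, e.2.1⟩, e.2.2⟩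
      left_inv := ?_
      right_inv := fun _ => rfl }
  rintro ⟨w | e, h⟩
  exacts [absurd h (not_adj_inl_inl (G := G) v w), rfl]

theorem degree_inr (e : G.edgeSet) : (subdivisionGraph G).degree (Sum.inr e) = 2 := by
  obtain ⟨e, he⟩ := e
  induction e using Sym2.ind with | h x y => ?_
  have hnbr : (subdivisionGraph G).neighborFinset (Sum.inr ⟨s(x, y), he⟩) =
      {Sum.inl x, Sum.inl y} := by
    ext (w | f) <;> simp [mem_neighborFinset]
  rw [← card_neighborFinset_eq_degree, hnbr,
    Finset.card_pair (by simpa using (G.mem_edgeSet.mp he).ne)]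

theorem groverMatrix_submatrix_dartEquiv :
    (groverMatrix (subdivisionGraph G)).submatrix dartEquiv dartEquiv =
      fromBlocks 0 1 (groverMatrix G) 0 := by
  have hfirst (d : G.Dart) : (subdivisionGraph G).degree (firstHalf d).snd = 2 := degree_inr _
  have hsecond (d : G.Dart) : (subdivisionGraph G).degree (secondHalf d).snd = G.degree d.snd :=
    degree_inl _
  ext (d | d) (d' | d') <;>
    simp only [submatrix_apply, dartEquiv_inl, dartEquiv_inr, fromBlocks_apply₁₁,
      fromBlocks_apply₁₂, fromBlocks_apply₂₁, fromBlocks_apply₂₂, groverMatrix_apply, hfirst,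
      hsecond] <;>
    simp only [firstHalf_symm, secondHalf_symm, firstHalf_injective.eq_iff,
      secondHalf_injective.eq_iff, firstHalf_fst, firstHalf_snd, secondHalf_fst, secondHalf_snd,
      Sum.inl.injEq, Sum.inr.injEq, Subtype.mk.injEq]
  case inl.inl => simp
  case inl.inr =>
    simp only [one_apply, dart_edge_eq_iff]
    by_cases h₁ : d' = d <;> by_cases h₂ : d' = d.symm <;>
      simp [h₁, h₂, eq_comm (a := d), Dart.symm_ne]
  case inr.inr => simp

end subdivisionGraph

theorem subdivision_periodic_general {V : Type*} [Fintype V] [DecidableEq V]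
    (G : SimpleGraph V) [DecidableRel G.Adj]
    (hne : G.edgeSet.Nonempty) (k : ℕ)
    (h : InducesPeriodicGroverWalk G k) :
    InducesPeriodicGroverWalk (subdivisionGraph G) (2 * k) := by
  have : Nonempty G.Dart := by
    obtain ⟨e, he⟩ := hne
    induction e using Sym2.ind with | h x y => exact ⟨⟨(x, y), he⟩⟩
  have hblocks : reindexAlgEquiv ℂ ℂ subdivisionGraph.dartEquiv.symm
      (groverMatrix (subdivisionGraph G)) = fromBlocks 0 1 (groverMatrix G) 0 :=
    subdivisionGraph.groverMatrix_submatrix_dartEquiv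
  show IsExactPeriod _ _
  rw [← isExactPeriod_map_iff (reindexAlgEquiv ℂ ℂ subdivisionGraph.dartEquiv.symm), hblocks]
  exact IsExactPeriod.fromBlocks_zero_one _ h

/-- **Proposition 5.2.** If `G` induces a `k`-periodic Grover walk, then
its subdivision graph `S(G)` induces a `2k`-periodic Grover walk. -/
theorem subdivision_periodic {V : Type*} [Fintype V] [DecidableEq V]
    (G : SimpleGraph V) [DecidableRel G.Adj] (hG : G.Connected)
    (hne : G.edgeSet.Nonempty) (k : ℕ) (hk : 0 < k)
    (h : InducesPeriodicGroverWalk G k) :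
    InducesPeriodicGroverWalk (subdivisionGraph G) (2 * k) :=
  subdivision_periodic_general G hne k h
end
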